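/- arXiv:2605.28470 — 2 statements merged into one kernel-verified Lean document; each statement's English description precedes it below -/
import Mathlib

section
/- The map h on the square B = [-π/2,π/2]², defined by h(x1,x2) = (x1 sin M/√(x1²+x2²), x2 sin M/√(x1²+x2²), cos M) with M = max(|x1|,|x2|) (and h(0,0) = (0,0,1)), is injective on the interior of B. -/
open Real

/-- The map `h` from the square `B = [-π/2, π/2]²` to the upper hemisphere. -/
noncomputable def zorichH (p : ℝ × ℝ) : ℝ × ℝ × ℝ :=
  if p = (0, 0) then (0, 0, 1)
  else
    (p.1 * Real.sin (max |p.1| |p.2|) / Real.sqrt (p.1 ^ 2 + p.2 ^ 2),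
     p.2 * Real.sin (max |p.1| |p.2|) / Real.sqrt (p.1 ^ 2 + p.2 ^ 2),
     Real.cos (max |p.1| |p.2|))

/-!
In terms of the sup norm `‖p‖ = max |p.1| |p.2|` on `ℝ × ℝ` and the Euclidean norm `|p|₂`,
the map is `h p = ((sin ‖p‖ / |p|₂) • p, cos ‖p‖)`. On the open square `‖p‖ < π/2` the last
coordinate `cos ‖p‖` determines `‖p‖`, and for `p ≠ 0` the first two coordinates are a positive
multiple of `p`, so they determine the ray through `p`. A point is determined by its ray and its
norm.
-/

theorem Ioo_prod_Ioo_eq_ball (r : ℝ) :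
    Set.Ioo (-r) r ×ˢ Set.Ioo (-r) r = Metric.ball (0 : ℝ × ℝ) r := by
  rw [← Prod.mk_zero_zero, ← ball_prod_same, Real.ball_eq_Ioo, zero_sub, zero_add]

theorem eq_of_smul_eq_smul_of_norm_eq {E : Type*} [NormedAddCommGroup E] [NormedSpace ℝ E]
    {p q : E} {c d : ℝ} (hc : 0 < c) (hd : 0 < d) (h : c • p = d • q) (hpq : ‖p‖ = ‖q‖) :
    p = q := by
  rcases eq_or_ne p 0 with rfl | hp
  · exact (norm_eq_zero.1 (hpq ▸ norm_zero)).symm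
  have hnorm : c * ‖p‖ = d * ‖p‖ := by
    simpa [norm_smul, abs_of_pos hc, abs_of_pos hd, ← hpq] using congrArg norm h
  have hcd : c = d := mul_right_cancel₀ (norm_ne_zero_iff.2 hp) hnorm
  rw [hcd] at h
  exact smul_right_injective E hd.ne' h

theorem zorichH_snd_snd (p : ℝ × ℝ) : (zorichH p).2.2 = cos ‖p‖ := by
  unfold zorichH
  split_ifs with hp
  · simp [hp]
  · rfl

theorem zorichH_planar (p : ℝ × ℝ) :
    ((zorichH p).1, (zorichH p).2.1) = (sin ‖p‖ / √(p.1 ^ 2 + p.2 ^ 2)) • p := by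
  unfold zorichH
  split_ifs with hp
  · simp [hp]
  · ext <;>
      simp only [Prod.norm_def, norm_eq_abs, Prod.smul_fst, Prod.smul_snd, smul_eq_mul] <;> ring

theorem zorichH_coeff_pos {p : ℝ × ℝ} (hp : p ≠ 0) (hp' : ‖p‖ < π / 2) :
    0 < sin ‖p‖ / √(p.1 ^ 2 + p.2 ^ 2) := by
  have hsin : 0 < sin ‖p‖ := sin_pos_of_pos_of_lt_pi (norm_pos_iff.2 hp) (by linarith [pi_pos])
  have hsq : 0 < p.1 ^ 2 + p.2 ^ 2 := by
    by_contra! h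
    have h₁ : p.1 = 0 := by nlinarith [sq_nonneg p.1, sq_nonneg p.2]
    have h₂ : p.2 = 0 := by nlinarith [sq_nonneg p.1, sq_nonneg p.2]
    exact hp (Prod.ext h₁ h₂)
  positivity

theorem stmt2 :
    Set.InjOn zorichH (Set.Ioo (-(π / 2)) (π / 2) ×ˢ Set.Ioo (-(π / 2)) (π / 2)) := by
  rw [Ioo_prod_Ioo_eq_ball]
  intro p hp q hq hpq
  rw [Metric.mem_ball, dist_zero_right] at hp hq
  have hnorm : ‖p‖ = ‖q‖ :=
    injOn_cos ⟨norm_nonneg p, by linarith [pi_pos]⟩ ⟨norm_nonneg q, by linarith [pi_pos]⟩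
      (by simpa only [zorichH_snd_snd] using congrArg (·.2.2) hpq)
  rcases eq_or_ne p 0 with rfl | hp0
  · exact (norm_eq_zero.1 (hnorm ▸ norm_zero)).symm
  have hq0 : q ≠ 0 := norm_ne_zero_iff.1 (hnorm ▸ norm_ne_zero_iff.2 hp0)
  refine eq_of_smul_eq_smul_of_norm_eq (zorichH_coeff_pos hp0 hp) (zorichH_coeff_pos hq0 hq) ?_ hnorm
  simpa only [zorichH_planar] using congrArg (fun x => (x.1, x.2.1)) hpq
end

section
/- Let η ∈ (0, π/4), ξ ∈ (0, η/3), and fix reals M, l, s. Suppose a ray from P = (p1,p2,p3) passes through a point A = (π/2 + Mπ, a2, a3) with a2 ∈ (π/2 + (l−1)π + η, π/2 + lπ − η), and suppose the direction of the ray has |Δx2| ≤ |Δx1| (i.e., angle at most π/4 with the x1-axis in the (x1,x2)-plane). If B = (b1,b2,b3) is a point on the ray with |b1 − (π/2 + Mπ)| = ξ, then b2 ∈ (π/2 + (l−1)π + ξ, π/2 + lπ − ξ). -/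
open Real

lemma abs_sub_le_abs_sub_of_mem_line {p₁ p₂ a₁ a₂ : ℝ} (s : ℝ) (hslope : |a₂ - p₂| ≤ |a₁ - p₁|) :
    |p₂ + s * (a₂ - p₂) - a₂| ≤ |p₁ + s * (a₁ - p₁) - a₁| := by
  have hshift : ∀ p a : ℝ, p + s * (a - p) - a = (s - 1) * (a - p) := fun p a => by ring
  rw [hshift, hshift, abs_mul, abs_mul]
  exact mul_le_mul_of_nonneg_left hslope (abs_nonneg _)

lemma mem_Ioo_of_abs_sub_le {x y a b η ξ : ℝ} (ha : a ∈ Set.Ioo (x + η) (y - η))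
    (hab : |b - a| ≤ ξ) (hξη : 2 * ξ ≤ η) : b ∈ Set.Ioo (x + ξ) (y - ξ) := by
  obtain ⟨hlo, hhi⟩ := abs_le.mp hab
  exact ⟨by linarith [ha.1], by linarith [ha.2]⟩

theorem stmt16_general (η ξ M l : ℝ)
    (hξ : ξ ∈ Set.Ioo 0 (η / 3))
    (p1 p2 p3 a2 a3 : ℝ)
    (ha2 : a2 ∈ Set.Ioo (π / 2 + (l - 1) * π + η) (π / 2 + l * π - η))
    -- the direction of the ray makes an angle at most π/4 with the x1-axis
    (hslope : |a2 - p2| ≤ |(π / 2 + M * π) - p1|)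
    (B : ℝ × ℝ × ℝ)
    -- B lies on the ray from P through A
    (hB : ∃ s : ℝ, 0 < s ∧
      B = (p1, p2, p3) + s • (((π / 2 + M * π, a2, a3) : ℝ × ℝ × ℝ) - (p1, p2, p3)))
    (hB1 : |B.1 - (π / 2 + M * π)| = ξ) :
    B.2.1 ∈ Set.Ioo (π / 2 + (l - 1) * π + ξ) (π / 2 + l * π - ξ) := by
  obtain ⟨s, -, rfl⟩ := hB
  have hclose := abs_sub_le_abs_sub_of_mem_line s hslope
  simp only [Prod.fst_add, Prod.snd_add, Prod.smul_fst, Prod.smul_snd, Prod.fst_sub,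
    Prod.snd_sub, smul_eq_mul] at hB1 ⊢
  exact mem_Ioo_of_abs_sub_le ha2 (hclose.trans hB1.le) (by linarith [hξ.1, hξ.2])

theorem stmt16 (η ξ M l : ℝ)
    (hη : η ∈ Set.Ioo 0 (π / 4)) (hξ : ξ ∈ Set.Ioo 0 (η / 3))
    (p1 p2 p3 a2 a3 : ℝ)
    (ha2 : a2 ∈ Set.Ioo (π / 2 + (l - 1) * π + η) (π / 2 + l * π - η))
    -- the direction of the ray makes an angle at most π/4 with the x1-axis
    (hslope : |a2 - p2| ≤ |(π / 2 + M * π) - p1|)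
    (B : ℝ × ℝ × ℝ)
    -- B lies on the ray from P through A
    (hB : ∃ s : ℝ, 0 < s ∧
      B = (p1, p2, p3) + s • (((π / 2 + M * π, a2, a3) : ℝ × ℝ × ℝ) - (p1, p2, p3)))
    (hB1 : |B.1 - (π / 2 + M * π)| = ξ) :
    B.2.1 ∈ Set.Ioo (π / 2 + (l - 1) * π + ξ) (π / 2 + l * π - ξ) :=
  stmt16_general η ξ M l hξ p1 p2 p3 a2 a3 ha2 hslope B hB hB1
end
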